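/- arXiv:0912.0114 — 8 statements merged into one kernel-verified Lean document; each statement's English description precedes it below -/
import Mathlib

section
/- Let (X,d) be a metric space satisfying the Lang–Schroeder–Sturm inequality for κ=0: for all p ∈ X, finite sequences (x_i) in X and positive reals (λ_i), Σ_{i,j} λ_i λ_j ⟨px_i,px_j⟩₀ ≥ 0 with ⟨px,py⟩₀ = ½(d(p,x)²+d(p,y)²−d(x,y)²). Then for every quadruple of distinct points (x; y, z, w) of X with all three comparison angles defined, ∠̃_0(x;y,z) + ∠̃_0(x;z,w) + ∠̃_0(x;w,y) ≤ 2π. -/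
/-- The κ = 0 comparison angle at `x` of the triple `(x; y, z)`. -/
noncomputable def cangle {X : Type*} [MetricSpace X] (x y z : X) : ℝ :=
  Real.arccos ((dist x y ^ 2 + dist x z ^ 2 - dist y z ^ 2) / (2 * dist x y * dist x z))

private lemma cos_bounds {X : Type*} [MetricSpace X] (x u v : X)
    (hu : 0 < dist x u) (hv : 0 < dist x v) :
    -1 ≤ (dist x u ^ 2 + dist x v ^ 2 - dist u v ^ 2) / (2 * dist x u * dist x v) ∧
      (dist x u ^ 2 + dist x v ^ 2 - dist u v ^ 2) / (2 * dist x u * dist x v) ≤ 1 := by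
  have t1 : dist u v ≤ dist u x + dist x v := dist_triangle u x v
  have t2 : dist x u ≤ dist x v + dist v u := dist_triangle x v u
  have t3 : dist x v ≤ dist x u + dist u v := dist_triangle x u v
  rw [dist_comm u x] at t1
  rw [dist_comm v u] at t2
  have hd : (0:ℝ) < 2 * dist x u * dist x v := by positivity
  constructor
  · rw [le_div_iff₀ hd]
    nlinarith [dist_nonneg (x := u) (y := v)]
  · rw [div_le_one hd]
    nlinarith [dist_nonneg (x := u) (y := v)]

private lemma arccos_le_arccos' {u v : ℝ} (h : u ≤ v) : Real.arccos v ≤ Real.arccos u := by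
  unfold Real.arccos
  have := Real.monotone_arcsin h
  linarith

/-- Purely real-analytic core: three "cosines" with a copositivity condition have
arccos-sum at most `2π`. -/
private lemma arccos_sum_le (c12 c23 c13 : ℝ)
    (hl12 : -1 ≤ c12) (hu12 : c12 ≤ 1) (hl23 : -1 ≤ c23) (hu23 : c23 ≤ 1)
    (hl13 : -1 ≤ c13) (hu13 : c13 ≤ 1)
    (key : ∀ μ₁ μ₂ μ₃ : ℝ, 0 < μ₁ → 0 < μ₂ → 0 < μ₃ →
      0 ≤ μ₁^2 + μ₂^2 + μ₃^2 + 2*μ₁*μ₂*c12 + 2*μ₂*μ₃*c23 + 2*μ₁*μ₃*c13) :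
    Real.arccos c12 + Real.arccos c23 + Real.arccos c13 ≤ 2 * Real.pi := by
  set α := Real.arccos c12 with hα
  set β := Real.arccos c23 with hβ
  set γ := Real.arccos c13 with hγ
  clear_value α β γ
  have hcosα : Real.cos α = c12 := by rw [hα]; exact Real.cos_arccos hl12 hu12
  have hcosβ : Real.cos β = c23 := by rw [hβ]; exact Real.cos_arccos hl23 hu23
  have hcosγ : Real.cos γ = c13 := by rw [hγ]; exact Real.cos_arccos hl13 hu13
  have hα0 : 0 ≤ α := hα ▸ Real.arccos_nonneg _
  have hβ0 : 0 ≤ β := hβ ▸ Real.arccos_nonneg _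
  have hγ0 : 0 ≤ γ := hγ ▸ Real.arccos_nonneg _
  have hαπ : α ≤ Real.pi := hα ▸ Real.arccos_le_pi _
  have hβπ : β ≤ Real.pi := hβ ▸ Real.arccos_le_pi _
  have hγπ : γ ≤ Real.pi := hγ ▸ Real.arccos_le_pi _
  by_cases hsum : β + γ ≤ Real.pi
  · linarith
  push_neg at hsum
  have hβpos : 0 < β := by linarith
  have hγpos : 0 < γ := by linarith
  by_cases hβtop : β = Real.pi
  · -- c23 = -1; show 0 ≤ c12 + c13, hence α ≤ π - γ
    have hc23m : c23 = -1 := by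
      have h := (Real.arccos_eq_pi).1 (hβ.symm.trans hβtop)
      linarith
    have hcc : 0 ≤ c12 + c13 := by
      by_contra hneg
      push_neg at hneg
      have ht : 0 < -(c12 + c13) := by linarith
      have ht0 : 0 < (-(c12 + c13))⁻¹ := by positivity
      have ht' : (-(c12 + c13))⁻¹ * (-(c12 + c13)) = 1 := inv_mul_cancel₀ ht.ne'
      have hk := key 1 (-(c12 + c13))⁻¹ (-(c12 + c13))⁻¹ one_pos ht0 ht0
      rw [hc23m] at hk
      nlinarith [hk, ht']
    have hle : α ≤ Real.pi - γ := by
      have h1 : α ≤ Real.arccos (-c13) := by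
        rw [hα]
        exact arccos_le_arccos' (by linarith)
      rwa [Real.arccos_neg, ← hγ] at h1
    linarith [hβtop.le]
  by_cases hγtop : γ = Real.pi
  · have hc13m : c13 = -1 := by
      have h := (Real.arccos_eq_pi).1 (hγ.symm.trans hγtop)
      linarith
    have hcc : 0 ≤ c12 + c23 := by
      by_contra hneg
      push_neg at hneg
      have ht : 0 < -(c12 + c23) := by linarith
      have ht0 : 0 < (-(c12 + c23))⁻¹ := by positivity
      have ht' : (-(c12 + c23))⁻¹ * (-(c12 + c23)) = 1 := inv_mul_cancel₀ ht.ne'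
      have hk := key (-(c12 + c23))⁻¹ 1 (-(c12 + c23))⁻¹ ht0 one_pos ht0
      rw [hc13m] at hk
      nlinarith [hk, ht']
    have hle : α ≤ Real.pi - β := by
      have h1 : α ≤ Real.arccos (-c23) := by
        rw [hα]
        exact arccos_le_arccos' (by linarith)
      rwa [Real.arccos_neg, ← hβ] at h1
    linarith [hγtop.le]
  -- main case: 0 < β < π, 0 < γ < π, π < β + γ < 2π
  have hβlt : β < Real.pi := lt_of_le_of_ne hβπ hβtop
  have hγlt : γ < Real.pi := lt_of_le_of_ne hγπ hγtop
  have hsβ : 0 < Real.sin β := Real.sin_pos_of_pos_of_lt_pi hβpos hβlt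
  have hsγ : 0 < Real.sin γ := Real.sin_pos_of_pos_of_lt_pi hγpos hγlt
  have hδ0 : 0 < 2 * Real.pi - (β + γ) := by linarith
  have hδπ : 2 * Real.pi - (β + γ) < Real.pi := by linarith
  have hsδ : 0 < Real.sin (2 * Real.pi - (β + γ)) := Real.sin_pos_of_pos_of_lt_pi hδ0 hδπ
  have H := key _ _ _ hsβ hsγ hsδ
  have hsinδ : Real.sin (2 * Real.pi - (β + γ)) = -Real.sin (β + γ) := by
    rw [Real.sin_sub, Real.sin_two_pi, Real.cos_two_pi]
    ring
  have hcosδ : Real.cos (2 * Real.pi - (β + γ)) = Real.cos (β + γ) := by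
    rw [Real.cos_sub, Real.sin_two_pi, Real.cos_two_pi]
    ring
  have hid : Real.sin β^2 + Real.sin γ^2 + Real.sin (2 * Real.pi - (β + γ))^2
      + 2*Real.sin β*Real.sin γ*c12
      + 2*Real.sin γ*Real.sin (2 * Real.pi - (β + γ))*c23
      + 2*Real.sin β*Real.sin (2 * Real.pi - (β + γ))*c13
      = 2*Real.sin β*Real.sin γ*(c12 - Real.cos (β+γ)) := by
    rw [hsinδ, ← hcosβ, ← hcosγ, Real.sin_add, Real.cos_add]
    linear_combination (-(Real.sin β ^ 2)) * Real.sin_sq_add_cos_sq γ +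
      (-(Real.sin γ ^ 2)) * Real.sin_sq_add_cos_sq β
  have hge : Real.cos (β + γ) ≤ c12 := by
    rw [hid] at H
    nlinarith [H, mul_pos hsβ hsγ]
  have hfin : α ≤ 2 * Real.pi - (β + γ) := by
    have h1 : 2 * Real.pi - (β + γ) = Real.arccos (Real.cos (2 * Real.pi - (β + γ))) :=
      (Real.arccos_cos hδ0.le hδπ.le).symm
    rw [h1, hα]
    apply arccos_le_arccos'
    rw [hcosδ]; exact hge
  linarith

theorem stmt_6 (X : Type*) [MetricSpace X]
    (hLSS : ∀ (N : ℕ) (p : X) (x : Fin N → X) (lam : Fin N → ℝ), (∀ i, 0 < lam i) →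
      0 ≤ ∑ i : Fin N, ∑ j : Fin N, lam i * lam j *
        ((dist p (x i) ^ 2 + dist p (x j) ^ 2 - dist (x i) (x j) ^ 2) / 2))
    (x y z w : X) (hxy : x ≠ y) (hxz : x ≠ z) (hxw : x ≠ w)
    (hyz : y ≠ z) (hyw : y ≠ w) (hzw : z ≠ w) :
    cangle x y z + cangle x z w + cangle x w y ≤ 2 * Real.pi := by
  have ha : 0 < dist x y := dist_pos.2 hxy
  have hb : 0 < dist x z := dist_pos.2 hxz
  have hc : 0 < dist x w := dist_pos.2 hxw
  obtain ⟨hl12, hu12⟩ := cos_bounds x y z ha hb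
  obtain ⟨hl23, hu23⟩ := cos_bounds x z w hb hc
  obtain ⟨hl13, hu13⟩ := cos_bounds x y w ha hc
  have hγeq : cangle x w y = Real.arccos
      ((dist x y ^ 2 + dist x w ^ 2 - dist y w ^ 2) / (2 * dist x y * dist x w)) := by
    rw [cangle, dist_comm w y]
    congr 1
    ring
  rw [show cangle x y z = Real.arccos
        ((dist x y ^ 2 + dist x z ^ 2 - dist y z ^ 2) / (2 * dist x y * dist x z)) from rfl,
      show cangle x z w = Real.arccos
        ((dist x z ^ 2 + dist x w ^ 2 - dist z w ^ 2) / (2 * dist x z * dist x w)) from rfl,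
      hγeq]
  apply arccos_sum_le _ _ _ hl12 hu12 hl23 hu23 hl13 hu13
  intro μ₁ μ₂ μ₃ h1 h2 h3
  have H := hLSS 3 x ![y,z,w] ![μ₁/dist x y, μ₂/dist x z, μ₃/dist x w]
    (by intro i; fin_cases i <;> simp <;> positivity)
  simp only [Fin.sum_univ_three, Matrix.cons_val_zero, Matrix.cons_val_one, Matrix.head_cons,
    Matrix.cons_val_two, Matrix.tail_cons, dist_self, dist_comm z y, dist_comm w y,
    dist_comm w z] at H
  have e : μ₁^2 + μ₂^2 + μ₃^2
      + 2*μ₁*μ₂*((dist x y^2 + dist x z^2 - dist y z^2)/(2*dist x y*dist x z))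
      + 2*μ₂*μ₃*((dist x z^2 + dist x w^2 - dist z w^2)/(2*dist x z*dist x w))
      + 2*μ₁*μ₃*((dist x y^2 + dist x w^2 - dist y w^2)/(2*dist x y*dist x w)) =
      μ₁ / dist x y * (μ₁ / dist x y) * ((dist x y ^ 2 + dist x y ^ 2 - 0 ^ 2) / 2) +
        μ₁ / dist x y * (μ₂ / dist x z) * ((dist x y ^ 2 + dist x z ^ 2 - dist y z ^ 2) / 2) +
        μ₁ / dist x y * (μ₃ / dist x w) * ((dist x y ^ 2 + dist x w ^ 2 - dist y w ^ 2) / 2) +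
        (μ₂ / dist x z * (μ₁ / dist x y) * ((dist x z ^ 2 + dist x y ^ 2 - dist y z ^ 2) / 2) +
          μ₂ / dist x z * (μ₂ / dist x z) * ((dist x z ^ 2 + dist x z ^ 2 - 0 ^ 2) / 2) +
          μ₂ / dist x z * (μ₃ / dist x w) * ((dist x z ^ 2 + dist x w ^ 2 - dist z w ^ 2) / 2)) +
        (μ₃ / dist x w * (μ₁ / dist x y) * ((dist x w ^ 2 + dist x y ^ 2 - dist y w ^ 2) / 2) +
          μ₃ / dist x w * (μ₂ / dist x z) * ((dist x w ^ 2 + dist x z ^ 2 - dist z w ^ 2) / 2) +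
          μ₃ / dist x w * (μ₃ / dist x w) * ((dist x w ^ 2 + dist x w ^ 2 - 0 ^ 2) / 2)) := by
    field_simp
    ring
  rw [e]
  convert H using 2
end

section
/- Let (X,d) be any metric space and α ∈ (0, 1/2]. Define d'(x,y) := d(x,y)^α. Then (X,d') is a metric space and for every p ∈ X, every finite sequence x_1,...,x_N ∈ X and positive reals λ_1,...,λ_N, the κ=0 Lang–Schroeder–Sturm inequality holds for d': Σ_{i,j} λ_i λ_j (d'(p,x_i)² + d'(p,x_j)² − d'(x_i,x_j)²) ≥ 0. In particular, every metric transform (X, d^α) with α ∈ (0,1/2] has nonnegative curvature in the comparison sense. -/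
lemma aux_subadd {a b p : ℝ} (ha : 0 ≤ a) (hb : 0 ≤ b) (hp : 0 ≤ p) (hp1 : p ≤ 1) :
    (a + b) ^ p ≤ a ^ p + b ^ p := by
  lift a to NNReal using ha
  lift b to NNReal using hb
  have := NNReal.rpow_add_le_add_rpow a b hp hp1
  exact_mod_cast this

theorem stmt_8 (X : Type*) [MetricSpace X] (α : ℝ) (hα : α ∈ Set.Ioc (0 : ℝ) (1/2)) :
    (∀ x y : X, dist x y ^ α = dist y x ^ α) ∧
    (∀ x y : X, dist x y ^ α = 0 ↔ x = y) ∧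
    (∀ x y z : X, dist x z ^ α ≤ dist x y ^ α + dist y z ^ α) ∧
    (∀ (N : ℕ) (p : X) (x : Fin N → X) (lam : Fin N → ℝ), (∀ i, 0 < lam i) →
      0 ≤ ∑ i : Fin N, ∑ j : Fin N, lam i * lam j *
        ((dist p (x i) ^ α) ^ 2 + (dist p (x j) ^ α) ^ 2
          - (dist (x i) (x j) ^ α) ^ 2)) := by
  obtain ⟨hα0, hα1⟩ := hα
  refine ⟨fun x y => by rw [dist_comm], ?_, ?_, ?_⟩
  · intro x y
    rw [Real.rpow_eq_zero dist_nonneg (ne_of_gt hα0), dist_eq_zero]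
  · intro x y z
    calc dist x z ^ α ≤ (dist x y + dist y z) ^ α :=
          Real.rpow_le_rpow dist_nonneg (dist_triangle x y z) hα0.le
      _ ≤ dist x y ^ α + dist y z ^ α :=
          aux_subadd dist_nonneg dist_nonneg hα0.le (by linarith)
  · intro N p x lam hlam
    have key : ∀ i j : Fin N,
        (dist (x i) (x j) ^ α) ^ 2 ≤ (dist p (x i) ^ α) ^ 2 + (dist p (x j) ^ α) ^ 2 := by
      intro i j
      have h2 : ∀ t : ℝ, 0 ≤ t → (t ^ α) ^ 2 = t ^ (2 * α) := by
        intro t ht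
        rw [← Real.rpow_natCast (t ^ α) 2, ← Real.rpow_mul ht]
        norm_num [mul_comm]
      rw [h2 _ dist_nonneg, h2 _ dist_nonneg, h2 _ dist_nonneg]
      calc dist (x i) (x j) ^ (2 * α)
          ≤ (dist p (x i) + dist p (x j)) ^ (2 * α) :=
            Real.rpow_le_rpow dist_nonneg (dist_triangle_left _ _ _) (by linarith)
        _ ≤ dist p (x i) ^ (2 * α) + dist p (x j) ^ (2 * α) :=
            aux_subadd dist_nonneg dist_nonneg (by linarith) (by linarith)
    refine Finset.sum_nonneg fun i _ => Finset.sum_nonneg fun j _ => ?_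
    have := key i j
    have hl := mul_pos (hlam i) (hlam j)
    nlinarith
end

section
/- Let (X,d) be a metric space satisfying, for all points, the κ=0 quadruple condition: ∠̃_0(x;y,z) + ∠̃_0(x;z,w) + ∠̃_0(x;w,y) ≤ 2π for all quadruples of distinct points. Suppose w ∈ X satisfies d(y,w) + d(w,z) = d(y,z) with d(y,w) = t·d(y,z), t ∈ (0,1). Then for any x ∈ X, d(x,w)² ≥ (1−t) d(x,y)² + t d(x,z)² − t(1−t) d(y,z)². -/
/-
Since `d(y, w) + d(w, z) = d(y, z)`, the comparison angle `∠̃₀(w; y, z)` is `π`.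
The quadruple condition at `w` then leaves at most `π` for `∠̃₀(w; x, y) + ∠̃₀(w; z, x)`, so the
cosines of these two angles have nonnegative sum. Clearing denominators is Stewart's relation for
the comparison triangle with `≤` in place of `=`, and dividing by `d(y, z)` gives the claim.
-/

open Real

def QuadrupleCondition (X : Type*) [MetricSpace X] : Prop :=
  ∀ a b c e : X, a ≠ b → a ≠ c → a ≠ e → b ≠ c → b ≠ e → c ≠ e →
    cangle a b c + cangle a c e + cangle a e b ≤ 2 * π

section

variable {X : Type*} [MetricSpace X]

lemma abs_cangle_arg_le_one {x y z : X} (hxy : x ≠ y) (hxz : x ≠ z) :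
    |(dist x y ^ 2 + dist x z ^ 2 - dist y z ^ 2) / (2 * dist x y * dist x z)| ≤ 1 := by
  have hy := dist_pos.2 hxy
  have hz := dist_pos.2 hxz
  have h₁ := dist_triangle_left y z x
  have h₂ := dist_triangle x y z
  have h₃ := dist_triangle x z y
  rw [dist_comm z y] at h₃
  have hden : 0 < 2 * dist x y * dist x z := by positivity
  rw [abs_div, abs_of_pos hden, div_le_one hden, abs_le]
  constructor <;> nlinarith [dist_nonneg (x := y) (y := z)]

lemma cos_cangle {x y z : X} (hxy : x ≠ y) (hxz : x ≠ z) :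
    cos (cangle x y z) =
      (dist x y ^ 2 + dist x z ^ 2 - dist y z ^ 2) / (2 * dist x y * dist x z) :=
  have h := abs_le.1 (abs_cangle_arg_le_one hxy hxz)
  cos_arccos h.1 h.2

lemma law_of_cosines_cangle {x y z : X} (hxy : x ≠ y) (hxz : x ≠ z) :
    2 * dist x y * dist x z * cos (cangle x y z) =
      dist x y ^ 2 + dist x z ^ 2 - dist y z ^ 2 := by
  have hy := dist_pos.2 hxy
  have hz := dist_pos.2 hxz
  rw [cos_cangle hxy hxz]
  field_simp

lemma cangle_eq_pi_of_dist_add_dist_eq {w y z : X} (hwy : w ≠ y) (hwz : w ≠ z)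
    (hmid : dist y w + dist w z = dist y z) : cangle w y z = π := by
  have hy := dist_pos.2 hwy
  have hz := dist_pos.2 hwz
  rw [cangle, ← hmid, dist_comm y w, ← arccos_neg_one]
  congr 1
  field_simp
  ring

lemma stewart_le_of_ne (hX : QuadrupleCondition X) {x y z w : X}
    (hmid : dist y w + dist w z = dist y z) (hwx : w ≠ x) (hwy : w ≠ y) (hwz : w ≠ z)
    (hxy : x ≠ y) (hxz : x ≠ z) (hyz : y ≠ z) :
    dist x y ^ 2 * dist w z + dist x z ^ 2 * dist w y
      ≤ dist y z * (dist x w ^ 2 + dist w y * dist w z) := by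
  have hangles : cangle w x y + cangle w z x ≤ π := by
    have := hX w x y z hwx hwy hwz hxy hxz hyz
    rw [cangle_eq_pi_of_dist_add_dist_eq hwy hwz hmid] at this
    linarith
  have hcos : -cos (cangle w z x) ≤ cos (cangle w x y) := by
    rw [← cos_pi_sub]
    exact cos_le_cos_of_nonneg_of_le_pi (arccos_nonneg _)
      (by linarith [show 0 ≤ cangle w z x from arccos_nonneg _]) (by linarith)
  have hcos_sum :
      0 ≤ dist w x * dist w y * dist w z * (cos (cangle w x y) + cos (cangle w z x)) :=
    mul_nonneg (by positivity) (by linarith)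
  rw [← hmid, dist_comm y w, dist_comm x w, dist_comm x z]
  linear_combination dist w z * law_of_cosines_cangle hwx hwy
    + dist w y * law_of_cosines_cangle hwz hwx + 2 * hcos_sum

lemma stewart_le (hX : QuadrupleCondition X) {y z w : X}
    (hmid : dist y w + dist w z = dist y z) (x : X) :
    dist x y ^ 2 * dist w z + dist x z ^ 2 * dist w y
      ≤ dist y z * (dist x w ^ 2 + dist w y * dist w z) := by
  rcases eq_or_ne w y with rfl | hwy
  · rw [dist_self]
    exact le_of_eq (by ring)
  rcases eq_or_ne w z with rfl | hwz
  · rw [dist_self, dist_comm w y]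
    exact le_of_eq (by ring)
  rcases eq_or_ne w x with rfl | hwx
  · rw [← hmid, dist_self, dist_comm w y]
    exact le_of_eq (by ring)
  rcases eq_or_ne x y with rfl | hxy
  · rw [← hmid, dist_self, dist_comm w x, dist_comm x w]
    exact le_of_eq (by ring)
  rcases eq_or_ne x z with rfl | hxz
  · rw [dist_self, dist_comm x y, ← hmid, dist_comm x w, dist_comm w y]
    exact le_of_eq (by ring)
  have hyz : y ≠ z := by
    rintro rfl
    rw [dist_self, dist_comm] at hmid
    exact hwy (dist_eq_zero.1 (by linarith [dist_nonneg (x := w) (y := y)]))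
  exact stewart_le_of_ne hX hmid hwx hwy hwz hxy hxz hyz

end

theorem stmt_11_general (X : Type*) [MetricSpace X]
    (hquad : ∀ a b c e : X, a ≠ b → a ≠ c → a ≠ e → b ≠ c → b ≠ e → c ≠ e →
      cangle a b c + cangle a c e + cangle a e b ≤ 2 * Real.pi)
    (y z w : X) (t : ℝ)
    (hmid : dist y w + dist w z = dist y z) (hyw : dist y w = t * dist y z) :
    ∀ x : X, (1 - t) * dist x y ^ 2 + t * dist x z ^ 2 - t * (1 - t) * dist y z ^ 2
      ≤ dist x w ^ 2 := by
  intro x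
  have hwz : dist w z = (1 - t) * dist y z := by linarith
  have hstewart := stewart_le hquad hmid x
  rw [hwz, dist_comm w y, hyw] at hstewart
  rcases (dist_nonneg (x := y) (y := z)).eq_or_lt with hL | hL
  · obtain rfl : y = z := dist_eq_zero.1 hL.symm
    obtain rfl : y = w := dist_eq_zero.1 (by rw [hyw, ← hL, mul_zero])
    rw [← hL]
    linarith
  · refine le_of_mul_le_mul_left ?_ hL
    linarith

theorem stmt_11 (X : Type*) [MetricSpace X]
    (hquad : ∀ a b c e : X, a ≠ b → a ≠ c → a ≠ e → b ≠ c → b ≠ e → c ≠ e →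
      cangle a b c + cangle a c e + cangle a e b ≤ 2 * Real.pi)
    (y z w : X) (t : ℝ) (ht : t ∈ Set.Ioo (0 : ℝ) 1)
    (hmid : dist y w + dist w z = dist y z) (hyw : dist y w = t * dist y z) :
    ∀ x : X, (1 - t) * dist x y ^ 2 + t * dist x z ^ 2 - t * (1 - t) * dist y z ^ 2
      ≤ dist x w ^ 2 :=
  stmt_11_general X hquad y z w t hmid hyw
end

section
/- In Euclidean space, with w = (1−t) y + t z for t ∈ (0,1), equality d(x,w)² = (1−t) d(x,y)² + t d(x,z)² − t(1−t) d(y,z)² holds for every x; conversely, in a metric space satisfying the κ=0 quadruple condition, if w ∈ (y,z) with d(y,w) = t d(y,z) and equality d(x,w)² = (1−t) d(x,y)² + t d(x,z)² − t(1−t) d(y,z)² holds, then the four points x, y, z, w embed isometrically into the Euclidean plane. -/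
theorem dist_smul_add_smul_sq {H : Type*} [NormedAddCommGroup H] [InnerProductSpace ℝ H]
    (x y z : H) (t : ℝ) :
    dist x ((1 - t) • y + t • z) ^ 2
      = (1 - t) * dist x y ^ 2 + t * dist x z ^ 2 - t * (1 - t) * dist y z ^ 2 := by
  have hx : x - ((1 - t) • y + t • z) = (1 - t) • (x - y) + t • (x - z) := by module
  have hyz : y - z = (x - z) - (x - y) := by abel
  simp only [dist_eq_norm]
  rw [hx, hyz, norm_add_sq_real, norm_sub_sq_real (x - z) (x - y), norm_smul, norm_smul,
    mul_pow, mul_pow, real_inner_smul_left, real_inner_smul_right, real_inner_comm,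
    Real.norm_eq_abs, Real.norm_eq_abs, sq_abs, sq_abs]
  ring

theorem EuclideanSpace.dist_fin_two (a b c d : ℝ) :
    dist !₂[a, b] !₂[c, d] = √((a - c) ^ 2 + (b - d) ^ 2) := by
  simp [EuclideanSpace.dist_eq, Fin.sum_univ_two, Real.dist_eq, sq_abs]

/-- `y ↦ (0, 0)`, `z ↦ (c, 0)`, and `x ↦ (p, √(a² - p²))` with `2cp = a² + c² - b²`
(law of cosines), where `a, b, c` are the side lengths opposite `z, y, x`. -/
theorem exists_isometric_triangle_in_plane {X : Type*} [MetricSpace X] (x y z : X) :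
    ∃ x' y' z' : EuclideanSpace ℝ (Fin 2),
      dist x' y' = dist x y ∧ dist x' z' = dist x z ∧ dist y' z' = dist y z := by
  rcases eq_or_ne y z with rfl | hyz
  · refine ⟨!₂[dist x y, 0], !₂[0, 0], !₂[0, 0], ?_, ?_, by simp⟩ <;>
      simp [EuclideanSpace.dist_fin_two, Real.sqrt_sq dist_nonneg]
  set a := dist x y
  set b := dist x z
  set c := dist y z
  have hc : 0 < c := dist_pos.2 hyz
  set p := (a ^ 2 + c ^ 2 - b ^ 2) / (2 * c)
  have hpc : 2 * c * p = a ^ 2 + c ^ 2 - b ^ 2 := by unfold p; field_simp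
  -- `(2ca)² - (2cp)² = ((a + c)² - b²)(b² - (a - c)²) ≥ 0` by the triangle inequality
  have hp : p ^ 2 ≤ a ^ 2 := by
    have hb : |a - c| ≤ b := by simpa [a, c, dist_comm z y] using abs_dist_sub_le x z y
    have hb' : b ≤ a + c := dist_triangle x y z
    obtain ⟨hb₁, hb₂⟩ := abs_le.1 hb
    have hcp : (c * p) ^ 2 ≤ (c * a) ^ 2 := by
      nlinarith [mul_nonneg (by nlinarith : 0 ≤ (a + c) ^ 2 - b ^ 2)
        (by nlinarith : 0 ≤ b ^ 2 - (a - c) ^ 2)]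
    nlinarith [pow_pos hc 2]
  refine ⟨!₂[p, √(a ^ 2 - p ^ 2)], !₂[0, 0], !₂[c, 0], ?_, ?_, ?_⟩ <;>
    rw [EuclideanSpace.dist_fin_two, Real.sqrt_eq_iff_eq_sq (by positivity) dist_nonneg]
  · linear_combination Real.sq_sqrt (sub_nonneg.2 hp)
  · linear_combination Real.sq_sqrt (sub_nonneg.2 hp) - hpc
  · ring

theorem stmt_12 :
    (∀ (H : Type) (_ : NormedAddCommGroup H) (_ : InnerProductSpace ℝ H),
      ∀ (x y z : H) (t : ℝ), t ∈ Set.Ioo (0 : ℝ) 1 →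
        dist x ((1 - t) • y + t • z) ^ 2
          = (1 - t) * dist x y ^ 2 + t * dist x z ^ 2 - t * (1 - t) * dist y z ^ 2) ∧
    (∀ (X : Type) (_ : MetricSpace X),
      (∀ a b c e : X, a ≠ b → a ≠ c → a ≠ e → b ≠ c → b ≠ e → c ≠ e →
        cangle a b c + cangle a c e + cangle a e b ≤ 2 * Real.pi) →
      ∀ (x y z w : X) (t : ℝ), t ∈ Set.Ioo (0 : ℝ) 1 →
        dist y w + dist w z = dist y z → w ≠ y → w ≠ z →
        dist y w = t * dist y z →
        dist x w ^ 2 = (1 - t) * dist x y ^ 2 + t * dist x z ^ 2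
            - t * (1 - t) * dist y z ^ 2 →
        ∃ x' y' z' w' : EuclideanSpace ℝ (Fin 2),
          dist x' y' = dist x y ∧ dist x' z' = dist x z ∧ dist x' w' = dist x w ∧
          dist y' z' = dist y z ∧ dist y' w' = dist y w ∧ dist z' w' = dist z w ∧
          w' ∈ segment ℝ y' z') := by
  refine ⟨fun H _ _ x y z t _ ↦ dist_smul_add_smul_sq x y z t, ?_⟩
  intro X _ _ x y z w t ht hyzw _ _ hyw hxw
  obtain ⟨x', y', z', hxy, hxz, hyz⟩ := exists_isometric_triangle_in_plane x y z
  have hzw : dist z w = (1 - t) * dist y z := by linarith [dist_comm z w]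
  refine ⟨x', y', z', AffineMap.lineMap y' z' t, hxy, hxz, ?_, hyz, ?_, ?_,
    lineMap_mem_segment ℝ y' z' (Set.Ioo_subset_Icc_self ht)⟩
  · rw [← sq_eq_sq₀ dist_nonneg dist_nonneg, AffineMap.lineMap_apply_module,
      dist_smul_add_smul_sq, hxy, hxz, hyz, hxw]
  · rw [dist_left_lineMap, hyz, hyw, Real.norm_of_nonneg ht.1.le]
  · rw [dist_comm, dist_lineMap_right, hyz, hzw, Real.norm_of_nonneg (sub_nonneg.2 ht.2.le)]
end

section
/- Let (X,d) be a geodesic metric space in which for every p ∈ X, finite (x_i) ⊂ X and positive (λ_i), Σ_{i,j} λ_i λ_j ⟨px_i, px_j⟩₀ ≥ 0 where ⟨px,py⟩₀ = ½(d(p,x)²+d(p,y)²−d(x,y)²). Let γ, η : [0,1] → X be constant speed geodesics and t ∈ (0,1), and suppose p ∈ X is a midpoint of γ(t) and η(t), i.e., d(γ(t),p) = d(p,η(t)) = ½ d(γ(t),η(t)). Then d(γ(t),η(t))² ≥ (1−t)² d(γ(0),η(0))² + t² d(γ(1),η(1))² + t(1−t)[d(γ(1),η(0))² + d(γ(0),η(1))²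 − d(γ(0),γ(1))² − d(η(0),η(1))²]. -/
theorem key_lemma {X : Type*} [MetricSpace X]
    (hLSS : ∀ (N : ℕ) (p : X) (x : Fin N → X) (lam : Fin N → ℝ), (∀ i, 0 < lam i) →
      0 ≤ ∑ i : Fin N, ∑ j : Fin N, lam i * lam j *
        ((dist p (x i) ^ 2 + dist p (x j) ^ 2 - dist (x i) (x j) ^ 2) / 2))
    (a b c q : X) (s : ℝ) (hs0 : 0 < s) (hs1 : s < 1)
    (hca : dist c a = s * dist a b) (hcb : dist c b = (1 - s) * dist a b) :
    (1 - s) * dist q a ^ 2 + s * dist q b ^ 2 - s * (1 - s) * dist a b ^ 2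
      ≤ dist c q ^ 2 := by
  set B : ℝ := dist c q ^ 2 + s * (1 - s) * dist a b ^ 2
      - (1 - s) * dist q a ^ 2 - s * dist q b ^ 2 with hBdef
  have hS : ∀ ε : ℝ, 0 < ε → 0 ≤ B * ε + dist c q ^ 2 * ε ^ 2 := by
    intro ε hε
    have h := hLSS 3 c ![a, b, q] ![1 - s, s, ε]
      (by intro i; fin_cases i <;> simp <;> linarith)
    simp only [Fin.sum_univ_three, Matrix.cons_val_zero, Matrix.cons_val_one,
      Matrix.head_cons, Matrix.cons_val_two, Matrix.tail_cons, dist_self] at h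
    rw [dist_comm b a, dist_comm q a, dist_comm q b, hca, hcb] at h
    rw [dist_comm a q, dist_comm b q] at h
    nlinarith [h]
  by_contra hB'
  push_neg at hB'
  have hB : B < 0 := by simp only [hBdef]; linarith
  have hQ : (0:ℝ) < dist c q ^ 2 + 1 := by positivity
  set ε : ℝ := -B / (dist c q ^ 2 + 1) with hεdef
  have hε : 0 < ε := div_pos (by linarith) hQ
  have hεeq : ε * (dist c q ^ 2 + 1) = -B := div_mul_cancel₀ _ (by positivity)
  have := hS ε hε
  nlinarith [this, hεeq, hε, hB, sq_nonneg (dist c q)]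

theorem stmt_14 (X : Type*) [MetricSpace X]
    (hLSS : ∀ (N : ℕ) (p : X) (x : Fin N → X) (lam : Fin N → ℝ), (∀ i, 0 < lam i) →
      0 ≤ ∑ i : Fin N, ∑ j : Fin N, lam i * lam j *
        ((dist p (x i) ^ 2 + dist p (x j) ^ 2 - dist (x i) (x j) ^ 2) / 2))
    (γ η : ℝ → X)
    (hγ : ∀ s ∈ Set.Icc (0 : ℝ) 1, ∀ u ∈ Set.Icc (0 : ℝ) 1,
      dist (γ s) (γ u) = |s - u| * dist (γ 0) (γ 1))
    (hη : ∀ s ∈ Set.Icc (0 : ℝ) 1, ∀ u ∈ Set.Icc (0 : ℝ) 1,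
      dist (η s) (η u) = |s - u| * dist (η 0) (η 1))
    (t : ℝ) (ht : t ∈ Set.Ioo (0 : ℝ) 1)
    (p : X) (hp₁ : dist (γ t) p = dist (γ t) (η t) / 2)
    (hp₂ : dist p (η t) = dist (γ t) (η t) / 2) :
    (1 - t) ^ 2 * dist (γ 0) (η 0) ^ 2 + t ^ 2 * dist (γ 1) (η 1) ^ 2
        + t * (1 - t) * (dist (γ 1) (η 0) ^ 2 + dist (γ 0) (η 1) ^ 2
            - dist (γ 0) (γ 1) ^ 2 - dist (η 0) (η 1) ^ 2)
      ≤ dist (γ t) (η t) ^ 2 := by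
  obtain ⟨ht0, ht1⟩ := ht
  have htm : t ∈ Set.Icc (0:ℝ) 1 := ⟨le_of_lt ht0, le_of_lt ht1⟩
  have h0m : (0:ℝ) ∈ Set.Icc (0:ℝ) 1 := ⟨le_refl _, zero_le_one⟩
  have h1m : (1:ℝ) ∈ Set.Icc (0:ℝ) 1 := ⟨zero_le_one, le_refl _⟩
  have hγ0 : dist (γ t) (γ 0) = t * dist (γ 0) (γ 1) := by
    rw [hγ t htm 0 h0m]; rw [sub_zero, abs_of_pos ht0]
  have hγ1 : dist (γ t) (γ 1) = (1 - t) * dist (γ 0) (γ 1) := by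
    rw [hγ t htm 1 h1m]; rw [abs_of_neg (by linarith : t - 1 < 0)]; ring_nf
  have hη0 : dist (η t) (η 0) = t * dist (η 0) (η 1) := by
    rw [hη t htm 0 h0m]; rw [sub_zero, abs_of_pos ht0]
  have hη1 : dist (η t) (η 1) = (1 - t) * dist (η 0) (η 1) := by
    rw [hη t htm 1 h1m]; rw [abs_of_neg (by linarith : t - 1 < 0)]; ring_nf
  have hkγ := key_lemma hLSS (γ 0) (γ 1) (γ t) p t ht0 ht1 hγ0 hγ1
  have hkη := key_lemma hLSS (η 0) (η 1) (η t) p t ht0 ht1 hη0 hη1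
  rw [hp₁] at hkγ
  rw [dist_comm (η t) p, hp₂] at hkη
  have h4 := hLSS 4 p ![γ 0, γ 1, η 0, η 1] ![1 - t, t, 1 - t, t]
    (by intro i; fin_cases i <;> simp <;> linarith)
  simp only [Fin.sum_univ_four, Matrix.cons_val_zero, Matrix.cons_val_one,
    Matrix.head_cons, Matrix.cons_val_two, Matrix.tail_cons, Matrix.cons_val_three,
    dist_self] at h4
  rw [dist_comm (γ 1) (γ 0), dist_comm (η 0) (γ 0), dist_comm (η 0) (γ 1),
    dist_comm (η 1) (γ 0), dist_comm (η 1) (γ 1), dist_comm (η 1) (η 0)] at h4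
  nlinarith [h4, hkγ, hkη]
end

section
/- Let (X,d) be a metric space and suppose p ∈ X and a finitely supported probability measure μ = Σ_i λ_i δ_{x_i} (λ_i > 0, Σλ_i = 1) satisfy the κ=0 Lang–Schroeder–Sturm inequality for all auxiliary points, and that Σ_{i,j} λ_i λ_j ⟨px_i,px_j⟩₀ = 0, where ⟨px,py⟩₀ = ½(d(p,x)²+d(p,y)²−d(x,y)²). Then for every z ∈ X, Σ_i λ_i ⟨pz, px_i⟩₀ ≥ 0. -/
theorem stmt_16 (X : Type*) [MetricSpace X] (p : X)
    (N : ℕ) (x : Fin N → X) (lam : Fin N → ℝ)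
    (hlam : ∀ i, 0 < lam i) (hsum : ∑ i : Fin N, lam i = 1)
    (hLSS : ∀ (M : ℕ) (y : Fin M → X) (mu : Fin M → ℝ), (∀ k, 0 < mu k) →
      0 ≤ ∑ k : Fin M, ∑ l : Fin M, mu k * mu l *
        ((dist p (y k) ^ 2 + dist p (y l) ^ 2 - dist (y k) (y l) ^ 2) / 2))
    (heq : ∑ i : Fin N, ∑ j : Fin N, lam i * lam j *
      ((dist p (x i) ^ 2 + dist p (x j) ^ 2 - dist (x i) (x j) ^ 2) / 2) = 0) :
    ∀ z : X, 0 ≤ ∑ i : Fin N, lam i *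
      ((dist p z ^ 2 + dist p (x i) ^ 2 - dist z (x i) ^ 2) / 2) := by
  intro z
  set g : X → X → ℝ := fun a b =>
    (dist p a ^ 2 + dist p b ^ 2 - dist a b ^ 2) / 2 with hg
  set S : ℝ := ∑ i : Fin N, lam i * g z (x i) with hS
  set c : ℝ := dist p z ^ 2 with hc
  have hc0 : 0 ≤ c := sq_nonneg _
  have gsymm : ∀ a b, g a b = g b a := by
    intro a b
    simp [hg, dist_comm]
    ring
  have gzz : g z z = c := by simp [hg, hc]
  -- key inequality: for all ε > 0, 0 ≤ ε^2 * c + 2 * ε * S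
  have key : ∀ ε : ℝ, 0 < ε → 0 ≤ ε ^ 2 * c + 2 * ε * S := by
    intro ε hε
    have h := hLSS (N + 1) (Fin.cons z x) (Fin.cons ε lam) (by
      intro k
      refine Fin.cases ?_ ?_ k
      · simpa using hε
      · intro i; simpa using hlam i)
    have hsplit : (∑ k : Fin (N + 1), ∑ l : Fin (N + 1),
        (Fin.cons ε lam : Fin (N+1) → ℝ) k * (Fin.cons ε lam : Fin (N+1) → ℝ) l *
        g ((Fin.cons z x : Fin (N+1) → X) k) ((Fin.cons z x : Fin (N+1) → X) l))
        = ε ^ 2 * c + 2 * ε * S := by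
      rw [Fin.sum_univ_succ]
      have h1 : (∑ l : Fin (N + 1),
          (Fin.cons ε lam : Fin (N+1) → ℝ) 0 * (Fin.cons ε lam : Fin (N+1) → ℝ) l *
          g ((Fin.cons z x : Fin (N+1) → X) 0) ((Fin.cons z x : Fin (N+1) → X) l))
          = ε ^ 2 * c + ε * S := by
        rw [Fin.sum_univ_succ]
        simp only [Fin.cons_zero, Fin.cons_succ, gzz]
        rw [hS, Finset.mul_sum]
        congr 1
        · ring
        · exact Finset.sum_congr rfl fun i _ => by ring
      rw [h1]
      have h2 : (∑ i : Fin N, ∑ l : Fin (N + 1),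
          (Fin.cons ε lam : Fin (N+1) → ℝ) i.succ * (Fin.cons ε lam : Fin (N+1) → ℝ) l *
          g ((Fin.cons z x : Fin (N+1) → X) i.succ) ((Fin.cons z x : Fin (N+1) → X) l))
          = ε * S := by
        have : ∀ i : Fin N, (∑ l : Fin (N + 1),
            (Fin.cons ε lam : Fin (N+1) → ℝ) i.succ * (Fin.cons ε lam : Fin (N+1) → ℝ) l *
            g ((Fin.cons z x : Fin (N+1) → X) i.succ) ((Fin.cons z x : Fin (N+1) → X) l))
            = ε * (lam i * g z (x i)) + ∑ j : Fin N, lam i * lam j * g (x i) (x j) := by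
          intro i
          rw [Fin.sum_univ_succ]
          simp only [Fin.cons_zero, Fin.cons_succ]
          rw [gsymm (x i) z]
          ring
        rw [Finset.sum_congr rfl fun i _ => this i, Finset.sum_add_distrib]
        have : (∑ i : Fin N, ∑ j : Fin N, lam i * lam j * g (x i) (x j)) = 0 := heq
        rw [this, add_zero, ← Finset.mul_sum, ← hS]
      rw [h2]; ring
    rw [hsplit] at h
    exact h
  -- conclude 0 ≤ S
  rw [← neg_nonpos]
  refine le_of_forall_pos_le_add ?_
  intro ε hε
  rw [zero_add]
  have hδ : (0:ℝ) < 2 * ε / (c + 1) := by positivity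
  have h := key _ hδ
  have hle : -S ≤ (2 * ε / (c + 1)) * c / 2 := by nlinarith
  have : (2 * ε / (c + 1)) * c / 2 = ε * (c / (c + 1)) := by ring
  rw [this] at hle
  have hfrac : c / (c + 1) ≤ 1 := by
    rw [div_le_one (by linarith)]; linarith
  nlinarith
end

section
/- Let x, y, z, w be four points in the Euclidean plane ℝ² with ∠̃_0(x;y,z) + ∠̃_0(x;z,w) + ∠̃_0(x;w,y) = 2π, where each angle is the usual angle at x. Then x lies in the closed triangle with vertices y, z, w (x is in the convex hull of {y,z,w}). -/
open EuclideanGeometry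

local instance factFinrank2 : Fact (Module.finrank ℝ (EuclideanSpace ℝ (Fin 2)) = 2) :=
  ⟨finrank_euclideanSpace_fin⟩

noncomputable local instance oriented2 : Module.Oriented ℝ (EuclideanSpace ℝ (Fin 2)) (Fin 2) :=
  ⟨Module.Basis.orientation (EuclideanSpace.basisFun (Fin 2) ℝ).toBasis⟩

/-- Vector-level core: if oriented angles (as reals) between `u,v`, `v,w`, `w,u` are in `(0,π)`
and sum to `2π`, then `0` is a positive combination of `u,v,w`. -/
lemma aux_vec (u v w : EuclideanSpace ℝ (Fin 2)) (hu : u ≠ 0) (hv : v ≠ 0) (hw : w ≠ 0)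
    (ha0 : 0 < (Module.Oriented.positiveOrientation.oangle u v).toReal)
    (haπ : (Module.Oriented.positiveOrientation.oangle u v).toReal < Real.pi)
    (hb0 : 0 < (Module.Oriented.positiveOrientation.oangle v w).toReal)
    (hbπ : (Module.Oriented.positiveOrientation.oangle v w).toReal < Real.pi)
    (hc0 : 0 < (Module.Oriented.positiveOrientation.oangle w u).toReal)
    (hcπ : (Module.Oriented.positiveOrientation.oangle w u).toReal < Real.pi)
    (hsum : (Module.Oriented.positiveOrientation.oangle u v).toReal
        + (Module.Oriented.positiveOrientation.oangle v w).toReal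
        + (Module.Oriented.positiveOrientation.oangle w u).toReal = 2 * Real.pi) :
    ∃ p q r : ℝ, 0 < p ∧ 0 < q ∧ 0 < r ∧ p • u + q • v + r • w = 0 := by
  set O := (Module.Oriented.positiveOrientation : Orientation ℝ (EuclideanSpace ℝ (Fin 2)) (Fin 2)) with hO
  set a := (O.oangle u v).toReal with hadef
  set b := (O.oangle v w).toReal with hbdef
  set c := (O.oangle w u).toReal with hcdef
  obtain ⟨s, hs, hv'⟩ : ∃ s : ℝ, 0 < s ∧ v = s • O.rotation (a : Real.Angle) u :=
    (O.oangle_eq_iff_eq_pos_smul_rotation_of_ne_zero hu hv _).1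
      (Real.Angle.coe_toReal _).symm
  have hwang : O.oangle u w = ((a + b : ℝ) : Real.Angle) := by
    rw [← O.oangle_add hu hv hw, Real.Angle.coe_add, Real.Angle.coe_toReal, Real.Angle.coe_toReal]
  obtain ⟨t, ht, hw'⟩ : ∃ t : ℝ, 0 < t ∧ w = t • O.rotation ((a + b : ℝ) : Real.Angle) u :=
    (O.oangle_eq_iff_eq_pos_smul_rotation_of_ne_zero hu hw _).1 hwang
  have hc2 : c = 2 * Real.pi - (a + b) := by linarith
  have hsinc : Real.sin c = -Real.sin (a + b) := by
    rw [hc2]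
    simp [Real.sin_sub, Real.sin_two_pi, Real.cos_two_pi]
  refine ⟨Real.sin b, Real.sin c / s, Real.sin a / t,
    Real.sin_pos_of_pos_of_lt_pi hb0 hbπ,
    div_pos (Real.sin_pos_of_pos_of_lt_pi hc0 hcπ) hs,
    div_pos (Real.sin_pos_of_pos_of_lt_pi ha0 haπ) ht, ?_⟩
  clear_value a b c
  conv_lhs => rw [hv', hw']
  rw [O.rotation_apply, O.rotation_apply, Real.Angle.cos_coe, Real.Angle.sin_coe,
    Real.Angle.cos_coe, Real.Angle.sin_coe, hsinc, Real.sin_add, Real.cos_add]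
  match_scalars <;> field_simp [hs.ne', ht.ne'] <;> ring_nf <;>
    linear_combination (-Real.sin b) * Real.sin_sq_add_cos_sq a

/-- Glue: a positive combination witnessing `0` gives convex hull membership. -/
lemma glue (x y z w : EuclideanSpace ℝ (Fin 2)) {p q r : ℝ} (hp : 0 < p) (hq : 0 < q)
    (hr : 0 < r) (h : p • (y - x) + q • (z - x) + r • (w - x) = 0) :
    x ∈ convexHull ℝ ({y, z, w} : Set (EuclideanSpace ℝ (Fin 2))) := by
  have hs : 0 < p + q + r := by linarith
  have key : p • y + q • z + r • w = (p + q + r) • x := by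
    linear_combination (norm := module) h
  have hx : x = Finset.univ.centerMass ![p, q, r] ![y, z, w] := by
    rw [Finset.centerMass, Fin.sum_univ_three, Fin.sum_univ_three]
    simp only [Matrix.cons_val_zero, Matrix.cons_val_one, Matrix.head_cons,
      Matrix.cons_val_two, Matrix.tail_cons]
    rw [key, inv_smul_smul₀ hs.ne']
  rw [hx]
  refine Finset.centerMass_mem_convexHull _ (fun i _ => ?_) ?_ (fun i _ => ?_)
  · fin_cases i <;> simp [hp.le, hq.le, hr.le]
  · rw [Fin.sum_univ_three]
    simpa using hs
  · fin_cases i <;> simp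

theorem stmt_17 (x y z w : EuclideanSpace ℝ (Fin 2))
    (hxy : x ≠ y) (hxz : x ≠ z) (hxw : x ≠ w)
    (hsum : ∠ y x z + ∠ z x w + ∠ w x y = 2 * Real.pi) :
    x ∈ convexHull ℝ ({y, z, w} : Set (EuclideanSpace ℝ (Fin 2))) := by
  by_cases hp1 : ∠ y x z = Real.pi
  · have hb := (EuclideanGeometry.angle_eq_pi_iff_sbtw.1 hp1).wbtw.mem_segment
    exact segment_subset_convexHull (by simp) (by simp) hb
  by_cases hp2 : ∠ z x w = Real.pi
  · have hb := (EuclideanGeometry.angle_eq_pi_iff_sbtw.1 hp2).wbtw.mem_segment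
    exact segment_subset_convexHull (by simp) (by simp) hb
  by_cases hp3 : ∠ w x y = Real.pi
  · have hb := (EuclideanGeometry.angle_eq_pi_iff_sbtw.1 hp3).wbtw.mem_segment
    exact segment_subset_convexHull (by simp) (by simp) hb
  have ht1 : ∠ y x z < Real.pi := lt_of_le_of_ne (EuclideanGeometry.angle_le_pi _ _ _) hp1
  have ht2 : ∠ z x w < Real.pi := lt_of_le_of_ne (EuclideanGeometry.angle_le_pi _ _ _) hp2
  have ht3 : ∠ w x y < Real.pi := lt_of_le_of_ne (EuclideanGeometry.angle_le_pi _ _ _) hp3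
  set O := (Module.Oriented.positiveOrientation :
    Orientation ℝ (EuclideanSpace ℝ (Fin 2)) (Fin 2)) with hO
  have hu : y - x ≠ 0 := sub_ne_zero.2 hxy.symm
  have hv : z - x ≠ 0 := sub_ne_zero.2 hxz.symm
  have hw : w - x ≠ 0 := sub_ne_zero.2 hxw.symm
  set A := (O.oangle (y - x) (z - x)).toReal with hA
  set B := (O.oangle (z - x) (w - x)).toReal with hB
  set C := (O.oangle (w - x) (y - x)).toReal with hC
  have habs1 : ∠ y x z = |A| := O.angle_eq_abs_oangle_toReal hu hv
  have habs2 : ∠ z x w = |B| := O.angle_eq_abs_oangle_toReal hv hw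
  have habs3 : ∠ w x y = |C| := O.angle_eq_abs_oangle_toReal hw hu
  have hAπ : |A| < Real.pi := habs1 ▸ ht1
  have hBπ : |B| < Real.pi := habs2 ▸ ht2
  have hCπ : |C| < Real.pi := habs3 ▸ ht3
  have habs : |A| + |B| + |C| = 2 * Real.pi := by
    rw [← habs1, ← habs2, ← habs3]; exact hsum
  have hang : O.oangle (y - x) (z - x) + O.oangle (z - x) (w - x)
      + O.oangle (w - x) (y - x) = 0 := by
    rw [O.oangle_add hu hv hw]
    exact O.oangle_add_oangle_rev _ _
  have hcoe : ((A + B + C : ℝ) : Real.Angle) = ((0 : ℝ) : Real.Angle) := by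
    rw [Real.Angle.coe_add, Real.Angle.coe_add, hA, hB, hC,
      Real.Angle.coe_toReal, Real.Angle.coe_toReal, Real.Angle.coe_toReal,
      Real.Angle.coe_zero]
    exact hang
  obtain ⟨k, hk⟩ := Real.Angle.angle_eq_iff_two_pi_dvd_sub.1 hcoe
  rw [sub_zero] at hk
  have hπ := Real.pi_pos
  have hle : A ≤ |A| := le_abs_self A
  have hle' : -|A| ≤ A := neg_abs_le A
  have hleB : B ≤ |B| := le_abs_self B
  have hleB' : -|B| ≤ B := neg_abs_le B
  have hleC : C ≤ |C| := le_abs_self C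
  have hleC' : -|C| ≤ C := neg_abs_le C
  have hk1 : k < 2 := by
    have : (k : ℝ) < 2 := by nlinarith
    exact_mod_cast this
  have hk2 : -2 < k := by
    have : (-2 : ℝ) < (k : ℝ) := by nlinarith
    exact_mod_cast this
  interval_cases k
  · -- k = -1 : all oriented angles negative; use reversed order y, w, z
    have hsum' : A + B + C = -(2 * Real.pi) := by
      push_cast at hk; linarith
    have hA0 : A < 0 := by linarith
    have hB0 : B < 0 := by linarith
    have hC0 : C < 0 := by linarith
    have hAn : -Real.pi < A := by
      rcases abs_cases A with ⟨e, _⟩ | ⟨e, _⟩ <;> linarith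
    have hBn : -Real.pi < B := by
      rcases abs_cases B with ⟨e, _⟩ | ⟨e, _⟩ <;> linarith
    have hCn : -Real.pi < C := by
      rcases abs_cases C with ⟨e, _⟩ | ⟨e, _⟩ <;> linarith
    have e1 : O.oangle (y - x) (w - x) = ((-C : ℝ) : Real.Angle) := by
      rw [O.oangle_rev (w - x) (y - x), ← Real.Angle.coe_toReal (O.oangle (w - x) (y - x)),
        ← Real.Angle.coe_neg, ← hC]
    have e2 : O.oangle (w - x) (z - x) = ((-B : ℝ) : Real.Angle) := by
      rw [O.oangle_rev (z - x) (w - x), ← Real.Angle.coe_toReal (O.oangle (z - x) (w - x)),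
        ← Real.Angle.coe_neg, ← hB]
    have e3 : O.oangle (z - x) (y - x) = ((-A : ℝ) : Real.Angle) := by
      rw [O.oangle_rev (y - x) (z - x), ← Real.Angle.coe_toReal (O.oangle (y - x) (z - x)),
        ← Real.Angle.coe_neg, ← hA]
    have t1 : (O.oangle (y - x) (w - x)).toReal = -C := by
      rw [e1]; exact Real.Angle.toReal_coe_eq_self_iff.2 ⟨by linarith, by linarith⟩
    have t2 : (O.oangle (w - x) (z - x)).toReal = -B := by
      rw [e2]; exact Real.Angle.toReal_coe_eq_self_iff.2 ⟨by linarith, by linarith⟩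
    have t3 : (O.oangle (z - x) (y - x)).toReal = -A := by
      rw [e3]; exact Real.Angle.toReal_coe_eq_self_iff.2 ⟨by linarith, by linarith⟩
    obtain ⟨p, q, r, hp, hq, hr, heq⟩ :=
      aux_vec (y - x) (w - x) (z - x) hu hw hv
        (by rw [t1]; linarith) (by rw [t1]; linarith)
        (by rw [t2]; linarith) (by rw [t2]; linarith)
        (by rw [t3]; linarith) (by rw [t3]; linarith)
        (by rw [t1, t2, t3]; linarith)
    have := glue x y w z hp hq hr heq
    rwa [show ({y, w, z} : Set (EuclideanSpace ℝ (Fin 2))) = {y, z, w} by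
      rw [Set.pair_comm w z]] at this
  · -- k = 0 : impossible
    exfalso
    push_cast at hk
    rcases abs_cases A with ⟨e1, f1⟩ | ⟨e1, f1⟩ <;>
      rcases abs_cases B with ⟨e2, f2⟩ | ⟨e2, f2⟩ <;>
      rcases abs_cases C with ⟨e3, f3⟩ | ⟨e3, f3⟩ <;> linarith
  · -- k = 1 : all oriented angles positive
    have hsum' : A + B + C = 2 * Real.pi := by push_cast at hk; linarith
    have hA1 : 0 < A := by linarith
    have hB1 : 0 < B := by linarith
    have hC1 : 0 < C := by linarith
    obtain ⟨p, q, r, hp, hq, hr, heq⟩ :=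
      aux_vec (y - x) (z - x) (w - x) hu hv hw
        hA1 (by linarith) hB1 (by linarith) hC1 (by linarith) hsum'
    exact glue x y z w hp hq hr heq
end

section
/- Let (X,d) be a metric space satisfying the κ=0 quadruple condition, let x,y,z,z' ∈ X with z' ∈ (x,z) (i.e., d(x,z') + d(z',z) = d(x,z), z' ≠ x,z) and y distinct from x. Then ∠̃_0(x; y, z') ≥ ∠̃_0(x; y, z) (monotonicity of the comparison angle). -/
private lemma arccos_antitone : Antitone Real.arccos := by
  intro a b h
  simp only [Real.arccos]
  have := Real.monotone_arcsin h
  linarith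

private lemma helper (p q r u v : ℝ) (hp : 0 < p) (hq : 0 < q) (hr : 0 < r) (hu : 0 < u)
    (t1 : p ≤ q + u) (t2 : q ≤ p + u) (t3 : u ≤ p + q)
    (t4 : v ≤ u + r) (t5 : u ≤ v + r) (t6 : r ≤ u + v)
    (hsum : Real.arccos ((q ^ 2 + u ^ 2 - p ^ 2) / (2 * q * u)) +
      Real.arccos ((u ^ 2 + r ^ 2 - v ^ 2) / (2 * u * r)) ≤ Real.pi) :
    Real.arccos ((p ^ 2 + (q + r) ^ 2 - v ^ 2) / (2 * p * (q + r))) ≤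
      Real.arccos ((p ^ 2 + q ^ 2 - u ^ 2) / (2 * p * q)) := by
  set A := (q ^ 2 + u ^ 2 - p ^ 2) / (2 * q * u) with hAdef
  set B := (u ^ 2 + r ^ 2 - v ^ 2) / (2 * u * r) with hBdef
  have hA1 : -1 ≤ A := by
    rw [hAdef, le_div_iff₀ (by positivity)]; nlinarith
  have hA2 : A ≤ 1 := by
    rw [hAdef, div_le_iff₀ (by positivity)]; nlinarith
  have hB1 : -1 ≤ B := by
    rw [hBdef, le_div_iff₀ (by positivity)]; nlinarith
  have hB2 : B ≤ 1 := by
    rw [hBdef, div_le_iff₀ (by positivity)]; nlinarith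
  have hBA : -A ≤ B := by
    by_contra hlt
    push_neg at hlt
    have h2 : Real.pi - Real.arccos A = Real.arccos (-A) := (Real.arccos_neg A).symm
    have h3 : Real.arccos (-A) < Real.arccos B :=
      Real.strictAntiOn_arccos ⟨hB1, hB2⟩ ⟨by linarith, by linarith⟩ hlt
    linarith
  have hAB : 0 ≤ A + B := by linarith
  have heq : q * (u ^ 2 + r ^ 2 - v ^ 2) + r * (q ^ 2 + u ^ 2 - p ^ 2)
      = 2 * q * u * r * (A + B) := by
    rw [hAdef, hBdef]; field_simp; ring
  have hkey2 : 0 ≤ q * (u ^ 2 + r ^ 2 - v ^ 2) + r * (q ^ 2 + u ^ 2 - p ^ 2) := by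
    rw [heq]; positivity
  apply arccos_antitone
  rw [div_le_div_iff₀ (by positivity) (by positivity)]
  nlinarith [hkey2, mul_pos hp hq, mul_pos hp hr]

theorem stmt_18 (X : Type*) [MetricSpace X]
    (hquad : ∀ a b c e : X, a ≠ b → a ≠ c → a ≠ e → b ≠ c → b ≠ e → c ≠ e →
      cangle a b c + cangle a c e + cangle a e b ≤ 2 * Real.pi)
    (x y z z' : X) (hyx : y ≠ x)
    (hz' : dist x z' + dist z' z = dist x z) (hz'x : z' ≠ x) (hz'z : z' ≠ z) :
    cangle x y z ≤ cangle x y z' := by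
  have hp : 0 < dist x y := dist_pos.2 hyx.symm
  have hq : 0 < dist x z' := dist_pos.2 (Ne.symm hz'x)
  have hr : 0 < dist z' z := dist_pos.2 hz'z
  by_cases hyz' : y = z'
  · -- y = z' : both angles are 0
    subst hyz'
    have hs : 0 < dist x z := by rw [← hz']; positivity
    have h1 : cangle x y y = 0 := by
      unfold cangle
      rw [Real.arccos_eq_zero, dist_self, le_div_iff₀ (by positivity)]
      nlinarith
    have h2 : cangle x y z = 0 := by
      unfold cangle
      rw [Real.arccos_eq_zero, le_div_iff₀ (by positivity)]
      nlinarith [hz']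
    rw [h1, h2]
  by_cases hyz : y = z
  · -- y = z : left angle is 0
    subst hyz
    have h2 : cangle x y y = 0 := by
      unfold cangle
      rw [Real.arccos_eq_zero, dist_self, le_div_iff₀ (by positivity)]
      nlinarith
    rw [h2]
    exact Real.arccos_nonneg _
  -- main case
  have hu : 0 < dist y z' := dist_pos.2 hyz'
  have hv : 0 < dist y z := dist_pos.2 hyz
  have hxz : x ≠ z := fun h => by
    rw [← h, dist_self] at hz'; linarith [dist_comm z' x]
  have hkey := hquad z' x y z hz'x (fun h => hyz' h.symm) hz'z hyx.symm hxz hyz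
  -- the angle at z' between z and x is π
  have hpi : cangle z' z x = Real.pi := by
    unfold cangle
    rw [dist_comm z' x, dist_comm z x, ← hz']
    have : (dist z' z ^ 2 + dist x z' ^ 2 - (dist x z' + dist z' z) ^ 2) /
        (2 * dist z' z * dist x z') = -1 := by
      field_simp; ring
    rw [this, Real.arccos_neg_one]
  have hA : cangle z' x y = Real.arccos ((dist x z' ^ 2 + dist y z' ^ 2 - dist x y ^ 2) /
      (2 * dist x z' * dist y z')) := by
    unfold cangle
    rw [dist_comm z' x, dist_comm z' y]
  have hB : cangle z' y z = Real.arccos ((dist y z' ^ 2 + dist z' z ^ 2 - dist y z ^ 2) /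
      (2 * dist y z' * dist z' z)) := by
    unfold cangle
    rw [dist_comm z' y]
  rw [hA, hB, hpi] at hkey
  have hgoal : cangle x y z = Real.arccos ((dist x y ^ 2 + (dist x z' + dist z' z) ^ 2 -
      dist y z ^ 2) / (2 * dist x y * (dist x z' + dist z' z))) := by
    unfold cangle
    rw [← hz']
  have hgoal' : cangle x y z' = Real.arccos ((dist x y ^ 2 + dist x z' ^ 2 - dist y z' ^ 2) /
      (2 * dist x y * dist x z')) := rfl
  rw [hgoal, hgoal']
  apply helper (dist x y) (dist x z') (dist z' z) (dist y z') (dist y z) hp hq hr hu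
  · have := dist_triangle x z' y; rw [dist_comm z' y] at this; linarith
  · exact dist_triangle x y z'
  · have := dist_triangle y x z'; rw [dist_comm y x] at this; linarith
  · exact dist_triangle y z' z
  · have := dist_triangle y z z'; rw [dist_comm z z'] at this; linarith
  · have := dist_triangle z' y z; rw [dist_comm z' y] at this; linarith
  · linarith
end
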